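/- arXiv:2305.10671 — 7 statements merged into one kernel-verified Lean document; each statement's English description precedes it below -/
import Mathlib

section
/- Let $n$ be a positive integer and $q = 2^n$. For any $x \in \mathbb{F}_{q^4}^*$ with decomposition $x = x_1 x_2 x_3$ where $x_1 \in \mu_{q-1}$, $x_2 \in \mu_{q+1}$, $x_3 \in \mu_{q^2+1}$, and with $d = q^3 + q^2 + q - 1$, one has $x^d = x_1^2 x_2^{-2} x_3^{-2}$. -/
/-
Since d + 2 = (q + 1)(q² + 1) is a multiple of both q + 1 and q² + 1, we get x₂ᵈ = x₂⁻² and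
x₃ᵈ = x₃⁻²; and d ≡ 2 mod q - 1 gives x₁ᵈ = x₁².
-/

theorem pow_eq_inv_pow_of_pow_eq_one {G : Type*} [DivisionMonoid G] {a : G} {m k e : ℕ}
    (ha : a ^ m = 1) (h : m ∣ k + e) : a ^ k = (a ^ e)⁻¹ := by
  obtain ⟨c, hc⟩ := h
  exact eq_inv_of_mul_eq_one_left (by rw [← pow_add, hc, pow_mul, ha, one_pow])

theorem cubic_exponent_add_two {q : ℕ} (hq : 1 ≤ q) :
    q ^ 3 + q ^ 2 + q - 1 + 2 = (q + 1) * (q ^ 2 + 1) := by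
  zify [show 1 ≤ q ^ 3 + q ^ 2 + q by omega]
  ring

theorem cubic_exponent_modEq_two {q : ℕ} (hq : 1 ≤ q) :
    q ^ 3 + q ^ 2 + q - 1 ≡ 2 [MOD q - 1] := by
  have h : q ^ 3 + q ^ 2 + q - 1 = 2 + (q - 1) * (q ^ 2 + 2 * q + 3) := by
    zify [hq, show 1 ≤ q ^ 3 + q ^ 2 + q by omega]
    ring
  rw [h, Nat.add_modulus_mul_modEq_iff]

theorem stmt2_general (n : ℕ) (q : ℕ) (hq : q = 2 ^ n)
    (K : Type*) [Field K]
    (d : ℕ) (hd : d = q ^ 3 + q ^ 2 + q - 1)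
    (x x1 x2 x3 : K)
    (h1 : x1 ^ (q - 1) = 1) (h2 : x2 ^ (q + 1) = 1) (h3 : x3 ^ (q ^ 2 + 1) = 1)
    (hdec : x = x1 * x2 * x3) :
    x ^ d = x1 ^ 2 * (x2 ^ 2)⁻¹ * (x3 ^ 2)⁻¹ := by
  have hq1 : 1 ≤ q := hq ▸ Nat.one_le_two_pow
  have hd2 : d + 2 = (q + 1) * (q ^ 2 + 1) := hd ▸ cubic_exponent_add_two hq1
  rw [hdec, mul_pow, mul_pow, hd, pow_eq_pow_of_modEq (cubic_exponent_modEq_two hq1) h1, ← hd,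
    pow_eq_inv_pow_of_pow_eq_one h2 (hd2 ▸ dvd_mul_right _ _),
    pow_eq_inv_pow_of_pow_eq_one h3 (hd2 ▸ dvd_mul_left _ _)]

/-- If `x = x₁x₂x₃` with `x₁ ∈ μ_{q-1}`, `x₂ ∈ μ_{q+1}`, `x₃ ∈ μ_{q²+1}`,
and `d = q³+q²+q-1`, then `x^d = x₁² x₂⁻² x₃⁻²`. -/
theorem stmt2 (n : ℕ) (hn : 0 < n) (q : ℕ) (hq : q = 2 ^ n)
    (K : Type*) [Field K] [Fintype K] (hK : Fintype.card K = q ^ 4)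
    (d : ℕ) (hd : d = q ^ 3 + q ^ 2 + q - 1)
    (x x1 x2 x3 : K) (hx : x ≠ 0)
    (h1 : x1 ^ (q - 1) = 1) (h2 : x2 ^ (q + 1) = 1) (h3 : x3 ^ (q ^ 2 + 1) = 1)
    (hdec : x = x1 * x2 * x3) :
    x ^ d = x1 ^ 2 * (x2 ^ 2)⁻¹ * (x3 ^ 2)⁻¹ :=
  stmt2_general n q hq K d hd x x1 x2 x3 h1 h2 h3 hdec
end

section
/- Let $n$ be a positive integer, $q = 2^n$, and $a \in \mathbb{F}_{q^2}^*$. The equation $x + x^{-1} = a$ has two distinct solutions in $\mu_{q^2+1} \setminus \{1\}$ (the $(q^2+1)$-th roots of unity in $\mathbb{F}_{q^4}$, excluding $1$) if and only if $\mathrm{Tr}_2^{q^2}(1/a) = 1$. -/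
/-!
In characteristic 2, for `a ≠ 0` the equation `z + z⁻¹ = a` says that `y = z / a` solves the
Artin–Schreier equation `y² + y = a⁻²`. Iterating `y ↦ y²` then gives `z^(q²) = z + a T`, where
`T = Tr(a⁻²) = Tr(a⁻¹)` is the trace to `𝔽₂` of an element of `𝔽_{q²}`, so
`z^(q²+1) = 1 + a z (1 + T)`: a solution lies in `μ_{q²+1}` exactly when `T = 1`.
The two solutions `z, z⁻¹` always exist in `𝔽_{q⁴}`, because the image of `y ↦ y² + y` is an
index-2 subgroup contained in the kernel of the absolute trace, which, being the root set of a
polynomial of degree `q⁴ / 2`, is no larger; and the absolute trace of `a⁻²` is `2T = 0`.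
-/

open Finset Polynomial

theorem sum_range_sq_two_pow_eq_of_pow_two_pow_eq {R : Type*} [Ring R] {c : R} {m : ℕ}
    (hc : c ^ 2 ^ m = c) : ∑ i ∈ range m, (c ^ 2) ^ 2 ^ i = ∑ i ∈ range m, c ^ 2 ^ i := by
  have h := (sum_range_succ' (fun i ↦ c ^ 2 ^ i) m).symm.trans (sum_range_succ _ m)
  simp only [pow_zero, pow_one, hc] at h
  simpa only [← pow_mul, ← pow_succ'] using add_right_cancel h

theorem ncard_setOf_sum_range_two_pow_eq_zero_le {R : Type*} [CommRing R] [IsDomain R] {m : ℕ}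
    (hm : 0 < m) : {z : R | ∑ i ∈ range m, z ^ 2 ^ i = 0}.ncard ≤ 2 ^ (m - 1) := by
  set P : R[X] := ∑ i ∈ range m, X ^ 2 ^ i
  have hP : P ≠ 0 := by
    have hcoeff : P.coeff 1 = 1 := by
      rw [finsetSum_coeff, sum_eq_single 0 _ (by simp [hm])]
      · simp
      · intro i _ hi
        rw [coeff_X_pow, if_neg]
        exact fun h ↦ hi (Nat.pow_eq_one.mp h.symm |>.resolve_left (by norm_num))
    exact fun h ↦ by simp [h] at hcoeff
  have hdeg : P.natDegree ≤ 2 ^ (m - 1) :=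
    natDegree_sum_le_of_forall_le _ _ fun i hi ↦ by
      rw [natDegree_X_pow]
      exact Nat.pow_le_pow_right two_pos (by grind)
  calc {z : R | ∑ i ∈ range m, z ^ 2 ^ i = 0}.ncard
      ≤ (P.rootSet R).ncard := by
        refine Set.ncard_le_ncard (fun z hz ↦ ?_) (P.rootSet_finite R)
        simpa [mem_rootSet, hP, P, eval_finsetSum] using hz
    _ ≤ P.natDegree := ncard_rootSet_le P R
    _ ≤ 2 ^ (m - 1) := hdeg

theorem setOf_add_inv_eq {K : Type*} [Field K] {a x : K} (ha : a ≠ 0) (hx : x + x⁻¹ = a) :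
    {z : K | z + z⁻¹ = a} = {x, x⁻¹} := by
  subst hx
  have hx0 : x ≠ 0 := by rintro rfl; simp at ha
  ext z
  simp only [Set.mem_ofPred_eq, Set.mem_insert_iff, Set.mem_singleton_iff]
  constructor
  · intro hz
    have hz0 : z ≠ 0 := by rintro rfl; exact ha (by simpa using hz.symm)
    have hfactor : (z - x) * (z * x - 1) = 0 := by
      field_simp at hz
      linear_combination hz
    rcases mul_eq_zero.mp hfactor with h | h
    · exact .inl (sub_eq_zero.mp h)
    · exact .inr (eq_inv_of_mul_eq_one_left (sub_eq_zero.mp h))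
  · rintro (rfl | rfl)
    · rfl
    · rw [inv_inv, add_comm]

section CharTwoRing

variable {R : Type*} [CommRing R] [CharP R 2]

theorem pow_two_pow_eq_add_sum_of_sq_add_self_eq {y c : R} (h : y ^ 2 + y = c) (m : ℕ) :
    y ^ 2 ^ m = y + ∑ i ∈ range m, c ^ 2 ^ i := by
  induction m with
  | zero => simp
  | succ m ih =>
    rw [pow_succ, pow_mul, ih, CharTwo.add_sq, CharTwo.sum_sq, sum_range_succ', ← h]
    simp only [← pow_mul, ← pow_succ, pow_zero, pow_one]
    grind

theorem sum_range_two_mul_two_pow_eq_zero {c : R} {m : ℕ} (hc : c ^ 2 ^ m = c) :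
    ∑ i ∈ range (2 * m), c ^ 2 ^ i = 0 := by
  have hshift (i : ℕ) : c ^ 2 ^ (m + i) = c ^ 2 ^ i := by rw [pow_add, pow_mul, hc]
  rw [two_mul, sum_range_add]
  simp only [hshift, CharTwo.add_self_eq_zero]

end CharTwoRing

section CharTwoField

variable {K : Type*} [Field K] [CharP K 2]

theorem sq_add_self_eq_zero_iff {y : K} : y ^ 2 + y = 0 ↔ y = 0 ∨ y = 1 := by
  rw [sq, ← mul_add_one, mul_eq_zero, CharTwo.add_eq_zero]

variable (K) in
def artinSchreier : K →+ K :=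
  AddMonoidHom.mk' (fun y ↦ y ^ 2 + y) fun y z ↦ by rw [CharTwo.add_sq]; ring

section Finite

variable [Fintype K] {m : ℕ}

theorem two_mul_card_range_artinSchreier (hK : Fintype.card K = 2 ^ m) :
    2 * Nat.card (artinSchreier K).range = 2 ^ m := by
  have hker : Nat.card (artinSchreier K).ker = 2 := by
    have : ((artinSchreier K).ker : Set K) = {0, 1} := by
      ext y
      simp [artinSchreier, sq_add_self_eq_zero_iff]
    rw [← SetLike.coe_sort_coe, Nat.card_coe_set_eq, this, Set.ncard_pair zero_ne_one]
  have h := AddSubgroup.card_mul_index (artinSchreier K).ker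
  rwa [hker, AddSubgroup.index_ker, Nat.card_eq_fintype_card (α := K), hK] at h

theorem sum_range_two_pow_sq_add_self (hK : Fintype.card K = 2 ^ m) (y : K) :
    ∑ i ∈ range m, (y ^ 2 + y) ^ 2 ^ i = 0 := by
  have h := pow_two_pow_eq_add_sum_of_sq_add_self_eq rfl m (y := y)
  rw [← hK, FiniteField.pow_card] at h
  exact add_eq_left.mp h.symm

theorem range_artinSchreier (hK : Fintype.card K = 2 ^ m) (hm : 0 < m) :
    Set.range (artinSchreier K) = {z : K | ∑ i ∈ range m, z ^ 2 ^ i = 0} := by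
  refine Set.eq_of_subset_of_ncard_le ?_ ?_
  · rintro _ ⟨y, rfl⟩
    exact sum_range_two_pow_sq_add_self hK y
  · have hrange : (Set.range (artinSchreier K)).ncard = Nat.card (artinSchreier K).range := by
      rw [← AddMonoidHom.coe_range, ← Nat.card_coe_set_eq]; rfl
    have hpow : 2 ^ m = 2 * 2 ^ (m - 1) := by rw [← pow_succ']; congr; omega
    have := two_mul_card_range_artinSchreier hK
    have := ncard_setOf_sum_range_two_pow_eq_zero_le (R := K) hm
    omega

end Finite

theorem mul_add_inv_mul_eq_self_iff {a : K} (ha : a ≠ 0) (y : K) :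
    a * y + (a * y)⁻¹ = a ↔ y ^ 2 + y = a⁻¹ ^ 2 := by
  rcases eq_or_ne y 0 with rfl | hy
  · simp [ha.symm, eq_comm (a := (0 : K)), ha]
  · field_simp
    grind

theorem pow_two_pow_eq_of_add_inv_eq {a : K} (ha : a ≠ 0) {z : K} (hz : z + z⁻¹ = a) {k : ℕ}
    (hak : a ^ 2 ^ k = a) : z ^ 2 ^ k = z + a * ∑ i ∈ range k, a⁻¹ ^ 2 ^ i := by
  have hy : (z / a) ^ 2 + z / a = a⁻¹ ^ 2 :=
    (mul_add_inv_mul_eq_self_iff ha (z / a)).mp (by rwa [mul_div_cancel₀ z ha])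
  have htrace := sum_range_sq_two_pow_eq_of_pow_two_pow_eq (c := a⁻¹) (by rw [inv_pow, hak])
  calc z ^ 2 ^ k = a ^ 2 ^ k * (z / a) ^ 2 ^ k := by rw [← mul_pow, mul_div_cancel₀ z ha]
    _ = z + a * ∑ i ∈ range k, a⁻¹ ^ 2 ^ i := by
      rw [hak, pow_two_pow_eq_add_sum_of_sq_add_self_eq hy, htrace, mul_add, mul_div_cancel₀ z ha]

theorem pow_two_pow_add_one_eq_one_iff {a : K} (ha : a ≠ 0) {z : K} (hz : z + z⁻¹ = a) {k : ℕ}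
    (hak : a ^ 2 ^ k = a) : z ^ (2 ^ k + 1) = 1 ↔ ∑ i ∈ range k, a⁻¹ ^ 2 ^ i = 1 := by
  set T := ∑ i ∈ range k, a⁻¹ ^ 2 ^ i
  have hz0 : z ≠ 0 := by rintro rfl; simp [eq_comm, ha] at hz
  have hquad : z ^ 2 = a * z + 1 := by
    rw [← hz, add_mul, inv_mul_cancel₀ hz0, add_assoc, CharTwo.add_self_eq_zero, add_zero, sq]
  have hpow : z ^ (2 ^ k + 1) = 1 + a * z * (1 + T) := by
    rw [pow_succ, pow_two_pow_eq_of_add_inv_eq ha hz hak]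
    linear_combination hquad
  rw [hpow, add_eq_left, mul_eq_zero, or_iff_right (mul_ne_zero ha hz0), CharTwo.add_eq_zero,
    eq_comm]

end CharTwoField

/-- For `a ∈ 𝔽_{q²}ˣ ⊆ 𝔽_{q⁴}`, the equation `x + x⁻¹ = a` has two distinct
solutions in `μ_{q²+1} \ {1}` iff `Tr_2^{q²}(1/a) = 1`. -/
theorem stmt4 (n : ℕ) (hn : 0 < n) (q : ℕ) (hq : q = 2 ^ n)
    (K : Type*) [Field K] [Fintype K] (hK : Fintype.card K = q ^ 4)
    (a : K) (ha : a ≠ 0) (ha2 : a ^ q ^ 2 = a) :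
    {x : K | x ^ (q ^ 2 + 1) = 1 ∧ x ≠ 1 ∧ x + x⁻¹ = a}.ncard = 2 ↔
      (∑ i ∈ Finset.range (2 * n), a⁻¹ ^ 2 ^ i) = 1 := by
  subst hq
  have hcard : Fintype.card K = 2 ^ (2 * (2 * n)) := by rw [hK]; ring
  have : CharP K 2 := charP_of_card_eq_prime_pow hcard
  rw [← pow_mul, mul_comm n 2] at ha2 ⊢
  set T := ∑ i ∈ range (2 * n), a⁻¹ ^ 2 ^ i
  obtain ⟨y, hy⟩ : a⁻¹ ^ 2 ∈ Set.range (artinSchreier K) := by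
    rw [range_artinSchreier hcard (by omega)]
    exact sum_range_two_mul_two_pow_eq_zero (by rw [← pow_mul, mul_comm, pow_mul, inv_pow, ha2])
  have hay := (mul_add_inv_mul_eq_self_iff ha y).mpr hy
  have hsolutions : {x : K | x ^ (2 ^ (2 * n) + 1) = 1 ∧ x ≠ 1 ∧ x + x⁻¹ = a} =
      {z : K | z + z⁻¹ = a ∧ T = 1} := by
    ext z
    refine ⟨fun ⟨hμ, _, hz⟩ ↦ ⟨hz, (pow_two_pow_add_one_eq_one_iff ha hz ha2).mp hμ⟩,
      fun ⟨hz, hT⟩ ↦ ⟨(pow_two_pow_add_one_eq_one_iff ha hz ha2).mpr hT, ?_, hz⟩⟩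
    rintro rfl
    exact ha (by rw [← hz, inv_one, CharTwo.add_self_eq_zero])
  have hne : a * y ≠ (a * y)⁻¹ := fun h ↦ ha (by rw [← hay, ← h, CharTwo.add_self_eq_zero])
  by_cases hT : T = 1
  · simp only [hsolutions, hT, and_true, setOf_add_inv_eq ha hay, Set.ncard_pair hne]
  · simp [hsolutions, hT]
end

section
/- Let $n$ be a positive integer and $q = 2^n$. Define $\Phi(x) = x + x^{-1}$ for $x \in \mathbb{F}_{q^4}^*$. Then the image of $\mu_{q+1} \setminus \{1\}$ under $\Phi$ equals $\{a \in \mathbb{F}_q^* : \mathrm{Tr}_2^q(1/a) = 1\}$, and the image of $\mathbb{F}_q^* \setminus \{1\}$ under $\Phi$ equals $\{a \in \mathbb{F}_q^* : \mathrm{Tr}_2^q(1/a) = 0\}$. -/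
/-!
For `x ≠ 1` in characteristic 2, `1 / (x + 1/x) = v² + v` with `v = 1/(x + 1)`, so the trace
`∑_{i<n} (1/Φ(x))^{2^i}` telescopes to `v^q + v`; this is `0` when `x^q = x` and `1` when
`x^q = 1/x`. Conversely, for `a ∈ 𝔽_qˣ`, the equation `x + 1/x = a` becomes `y² + y = 1/a²` with
`x = a y`. The absolute trace of `1/a²` over `𝔽_{q⁴}` consists of four equal blocks, hence
vanishes, so `X² + X + 1/a²` divides `X^{q⁴} - X` and has a root in `K`. Finally `x^q` solves
`z + 1/z = a^q = a` as well, so `x^q ∈ {x, 1/x}`, and the trace decides which case occurs.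
-/

open Finset Polynomial

section CharTwoRing

variable {R : Type*} [CommRing R] [CharP R 2]

theorem sum_range_sq_add_self_pow_two_pow (u : R) (m : ℕ) :
    ∑ i ∈ range m, (u ^ 2 + u) ^ 2 ^ i = u ^ 2 ^ m + u := by
  induction m with
  | zero => simp [CharTwo.add_self_eq_zero]
  | succ m ih =>
    rw [sum_range_succ, ih, add_pow_char_pow, ← pow_mul, ← pow_succ']
    linear_combination u ^ 2 ^ m * CharTwo.two_eq_zero (R := R)

theorem sum_range_add_pow_two_pow (c : R) (m k : ℕ) :
    ∑ i ∈ range (m + k), c ^ 2 ^ i =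
      ∑ i ∈ range m, c ^ 2 ^ i + (∑ i ∈ range k, c ^ 2 ^ i) ^ 2 ^ m := by
  rw [sum_range_add, sum_pow_char_pow]
  congr 1
  refine sum_congr rfl fun i _ => ?_
  rw [← pow_mul, ← pow_add, add_comm]

theorem sum_range_two_mul_pow_two_pow_eq_zero {c : R} {n : ℕ} (hc : c ^ 2 ^ n = c) :
    ∑ i ∈ range (2 * n), c ^ 2 ^ i = 0 := by
  have hperiodic (i : ℕ) : (c ^ 2 ^ i) ^ 2 ^ n = c ^ 2 ^ i := by
    rw [← pow_mul, mul_comm, pow_mul, hc]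
  rw [two_mul, sum_range_add_pow_two_pow, sum_pow_char_pow, sum_congr rfl fun i _ => hperiodic i,
    CharTwo.add_self_eq_zero]

end CharTwoRing

section Field

variable {K : Type*} [Field K]

theorem eq_or_eq_inv_of_add_inv_eq_add_inv {x z : K} (hx : x ≠ 0) (hz : z ≠ 0)
    (h : z + z⁻¹ = x + x⁻¹) : z = x ∨ z = x⁻¹ := by
  have : (z - x) * (z * x - 1) = 0 := by
    field_simp at h
    linear_combination h
  rcases mul_eq_zero.mp this with h | h
  · exact .inl (sub_eq_zero.mp h)
  · exact .inr (eq_inv_of_mul_eq_one_left (sub_eq_zero.mp h))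

theorem inv_add_one_inv_add_add_one_inv {x : K} (hx0 : x ≠ 0) (hx1 : x + 1 ≠ 0) :
    (x⁻¹ + 1)⁻¹ + (x + 1)⁻¹ = 1 := by
  have : x⁻¹ + 1 = (x + 1) / x := by field_simp; ring
  rw [this, inv_div]
  field_simp

end Field

section CharTwoField

variable {K : Type*} [Field K] [CharP K 2]

theorem add_one_ne_zero_of_ne_one {x : K} (hx1 : x ≠ 1) : x + 1 ≠ 0 := by
  rwa [Ne, CharTwo.add_eq_zero]

theorem add_inv_eq_add_one_sq_div {x : K} (hx0 : x ≠ 0) : x + x⁻¹ = (x + 1) ^ 2 / x := by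
  field_simp
  linear_combination -x * CharTwo.two_eq_zero (R := K)

theorem add_inv_ne_zero {x : K} (hx0 : x ≠ 0) (hx1 : x ≠ 1) : x + x⁻¹ ≠ 0 := by
  rw [add_inv_eq_add_one_sq_div hx0]
  exact div_ne_zero (pow_ne_zero 2 (add_one_ne_zero_of_ne_one hx1)) hx0

theorem inv_add_inv_eq_sq_add_self {x : K} (hx1 : x ≠ 1) :
    (x + x⁻¹)⁻¹ = (x + 1)⁻¹ ^ 2 + (x + 1)⁻¹ := by
  rcases eq_or_ne x 0 with rfl | hx0
  · simp [CharTwo.add_self_eq_zero]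
  · have := add_one_ne_zero_of_ne_one hx1
    rw [add_inv_eq_add_one_sq_div hx0, inv_div]
    field_simp
    linear_combination -CharTwo.two_eq_zero (R := K)

theorem add_inv_pow_two_pow (x : K) (m : ℕ) : (x + x⁻¹) ^ 2 ^ m = x ^ 2 ^ m + (x ^ 2 ^ m)⁻¹ := by
  rw [add_pow_char_pow, inv_pow]

theorem sum_range_inv_add_inv_pow_two_pow {x : K} (hx1 : x ≠ 1) (m : ℕ) :
    ∑ i ∈ range m, (x + x⁻¹)⁻¹ ^ 2 ^ i = (x ^ 2 ^ m + 1)⁻¹ + (x + 1)⁻¹ := by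
  rw [inv_add_inv_eq_sq_add_self hx1, sum_range_sq_add_self_pow_two_pow, inv_pow, add_pow_char_pow,
    one_pow]

theorem exists_sq_add_self_eq [Fintype K] {N : ℕ} (hK : Fintype.card K = 2 ^ N) {b : K}
    (hb : ∑ i ∈ range N, b ^ 2 ^ i = 0) : ∃ y : K, y ^ 2 + y = b := by
  set u : K[X] := X ^ 2 + X + C b with hu
  have hdvd : u ∣ X ^ Fintype.card K - X := by
    -- the trace of `u` telescopes, and the constant term is the trace of `b`
    have : ∑ i ∈ range N, u ^ 2 ^ i = X ^ Fintype.card K - X := by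
      simp_rw [hu, add_pow_char_pow (X ^ 2 + X : K[X]), sum_add_distrib, sum_range_sq_add_self_pow_two_pow, ← C_pow,
        ← map_sum, hb, map_zero, add_zero, hK, CharTwo.sub_eq_add]
    exact this ▸ dvd_sum fun i _ => dvd_pow_self u (by positivity)
  have hsplits : Splits (X ^ Fintype.card K - X : K[X]) := by
    rw [splits_iff_card_roots, FiniteField.roots_X_pow_card_sub_X,
      FiniteField.X_pow_card_sub_X_natDegree_eq K Fintype.one_lt_card]
    rfl
  have hdeg : u.degree = 2 := by
    rw [hu]; compute_degree!
  obtain ⟨y, hy⟩ := (hsplits.of_dvd (FiniteField.X_pow_card_sub_X_ne_zero K Fintype.one_lt_card)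
    hdvd).exists_eval_eq_zero (by rw [hdeg]; decide)
  refine ⟨y, ?_⟩
  simpa [hu, CharTwo.add_eq_zero] using hy

theorem exists_add_inv_eq [Fintype K] {N : ℕ} (hK : Fintype.card K = 2 ^ N) {a : K} (ha : a ≠ 0)
    (htr : ∑ i ∈ range N, (a⁻¹ ^ 2) ^ 2 ^ i = 0) : ∃ x : K, x + x⁻¹ = a := by
  obtain ⟨y, hy⟩ := exists_sq_add_self_eq hK htr
  have hx : a * y * (a * y + a) = 1 := by
    rw [show a * y * (a * y + a) = a ^ 2 * (y ^ 2 + y) by ring, hy, ← mul_pow, mul_inv_cancel₀ ha,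
      one_pow]
  refine ⟨a * y, ?_⟩
  rw [inv_eq_of_mul_eq_one_right hx]
  linear_combination a * y * CharTwo.two_eq_zero (R := K)

variable {n : ℕ}

theorem add_inv_of_pow_two_pow_succ_eq_one {x : K} (hx : x ^ (2 ^ n + 1) = 1) (hx1 : x ≠ 1) :
    x + x⁻¹ ≠ 0 ∧ (x + x⁻¹) ^ 2 ^ n = x + x⁻¹ ∧ ∑ i ∈ range n, (x + x⁻¹)⁻¹ ^ 2 ^ i = 1 := by
  have hx0 : x ≠ 0 := by
    rintro rfl
    simp at hx
  have hxq : x ^ 2 ^ n = x⁻¹ := by rwa [pow_succ, mul_eq_one_iff_eq_inv₀ hx0] at hx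
  refine ⟨add_inv_ne_zero hx0 hx1, by rw [add_inv_pow_two_pow, hxq, inv_inv, add_comm], ?_⟩
  rw [sum_range_inv_add_inv_pow_two_pow hx1, hxq]
  exact inv_add_one_inv_add_add_one_inv hx0 (add_one_ne_zero_of_ne_one hx1)

theorem add_inv_of_pow_two_pow_eq_self {x : K} (hxq : x ^ 2 ^ n = x) (hx0 : x ≠ 0) (hx1 : x ≠ 1) :
    x + x⁻¹ ≠ 0 ∧ (x + x⁻¹) ^ 2 ^ n = x + x⁻¹ ∧ ∑ i ∈ range n, (x + x⁻¹)⁻¹ ^ 2 ^ i = 0 := by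
  refine ⟨add_inv_ne_zero hx0 hx1, by rw [add_inv_pow_two_pow, hxq], ?_⟩
  rw [sum_range_inv_add_inv_pow_two_pow hx1, hxq, CharTwo.add_self_eq_zero]

theorem exists_add_inv_eq_of_pow_two_pow_eq_self [Fintype K]
    (hK : Fintype.card K = 2 ^ (4 * n)) {a : K} (ha0 : a ≠ 0) (haq : a ^ 2 ^ n = a) :
    (∃ x : K, x ^ (2 ^ n + 1) = 1 ∧ x ≠ 1 ∧ x + x⁻¹ = a) ∨
      (∃ x : K, x ^ 2 ^ n = x ∧ x ≠ 0 ∧ x ≠ 1 ∧ x + x⁻¹ = a) := by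
  have hcq : (a⁻¹ ^ 2) ^ 2 ^ n = a⁻¹ ^ 2 := by rw [← pow_mul, mul_comm, pow_mul, inv_pow, haq]
  have hcq2 : (a⁻¹ ^ 2) ^ 2 ^ (2 * n) = a⁻¹ ^ 2 := by rw [two_mul, pow_add, pow_mul, hcq, hcq]
  obtain ⟨x, rfl⟩ := exists_add_inv_eq hK ha0 <| by
    rw [show 4 * n = 2 * (2 * n) by ring]
    exact sum_range_two_mul_pow_two_pow_eq_zero hcq2
  have hx0 : x ≠ 0 := by
    rintro rfl
    simp at ha0
  have hx1 : x ≠ 1 := by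
    rintro rfl
    simp [CharTwo.add_self_eq_zero] at ha0
  have hxq : x ^ 2 ^ n + (x ^ 2 ^ n)⁻¹ = x + x⁻¹ := by rw [← add_inv_pow_two_pow, haq]
  rcases eq_or_eq_inv_of_add_inv_eq_add_inv hx0 (pow_ne_zero _ hx0) hxq with h | h
  · exact .inr ⟨x, h, hx0, hx1, rfl⟩
  · exact .inl ⟨x, by rw [pow_succ, h, inv_mul_cancel₀ hx0], hx1, rfl⟩

end CharTwoField

theorem stmt6_general (n : ℕ) (q : ℕ) (hq : q = 2 ^ n)
    (K : Type*) [Field K] [Fintype K] (hK : Fintype.card K = q ^ 4) :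
    {a : K | ∃ x : K, x ^ (q + 1) = 1 ∧ x ≠ 1 ∧ x + x⁻¹ = a} =
      {a : K | a ≠ 0 ∧ a ^ q = a ∧ (∑ i ∈ Finset.range n, a⁻¹ ^ 2 ^ i) = 1} ∧
    {a : K | ∃ x : K, x ^ q = x ∧ x ≠ 0 ∧ x ≠ 1 ∧ x + x⁻¹ = a} =
      {a : K | a ≠ 0 ∧ a ^ q = a ∧ (∑ i ∈ Finset.range n, a⁻¹ ^ 2 ^ i) = 0} := by
  subst hq
  have hK : Fintype.card K = 2 ^ (4 * n) := by rw [hK, ← pow_mul, mul_comm]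
  have : CharP K 2 := charP_of_card_eq_prime_pow hK
  refine ⟨Set.ext fun a => ⟨?_, ?_⟩, Set.ext fun a => ⟨?_, ?_⟩⟩
  · rintro ⟨x, hx, hx1, rfl⟩
    exact add_inv_of_pow_two_pow_succ_eq_one hx hx1
  · rintro ⟨ha0, haq, htr⟩
    refine (exists_add_inv_eq_of_pow_two_pow_eq_self hK ha0 haq).resolve_right ?_
    rintro ⟨x, hxq, hx0, hx1, rfl⟩
    exact one_ne_zero (htr.symm.trans (add_inv_of_pow_two_pow_eq_self hxq hx0 hx1).2.2)
  · rintro ⟨x, hxq, hx0, hx1, rfl⟩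
    exact add_inv_of_pow_two_pow_eq_self hxq hx0 hx1
  · rintro ⟨ha0, haq, htr⟩
    refine (exists_add_inv_eq_of_pow_two_pow_eq_self hK ha0 haq).resolve_left ?_
    rintro ⟨x, hx, hx1, rfl⟩
    exact zero_ne_one (htr.symm.trans (add_inv_of_pow_two_pow_succ_eq_one hx hx1).2.2)

/-- With `Φ(x) = x + x⁻¹` on `𝔽_{q⁴}ˣ`:
`Φ(μ_{q+1}\{1}) = {a ∈ 𝔽_qˣ : Tr_2^q(1/a) = 1}` and
`Φ(𝔽_qˣ\{1}) = {a ∈ 𝔽_qˣ : Tr_2^q(1/a) = 0}`. -/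
theorem stmt6 (n : ℕ) (hn : 0 < n) (q : ℕ) (hq : q = 2 ^ n)
    (K : Type*) [Field K] [Fintype K] (hK : Fintype.card K = q ^ 4) :
    {a : K | ∃ x : K, x ^ (q + 1) = 1 ∧ x ≠ 1 ∧ x + x⁻¹ = a} =
      {a : K | a ≠ 0 ∧ a ^ q = a ∧ (∑ i ∈ Finset.range n, a⁻¹ ^ 2 ^ i) = 1} ∧
    {a : K | ∃ x : K, x ^ q = x ∧ x ≠ 0 ∧ x ≠ 1 ∧ x + x⁻¹ = a} =
      {a : K | a ≠ 0 ∧ a ^ q = a ∧ (∑ i ∈ Finset.range n, a⁻¹ ^ 2 ^ i) = 0} :=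
  stmt6_general n q hq K hK
end

section
/- Let $n$ be a positive integer and $q = 2^n$. Define $\Lambda = \{c \in \mathbb{F}_{q^4}^* : \mathfrak{t}' \neq 0 \text{ and } \mathrm{Tr}_2^q(\mathfrak{n}'^{(q+1)/2}/\mathfrak{t}') = 1\}$, where $\mathfrak{t} = c + c^{q^2}$, $\mathfrak{n} = c^{q^2+1}$, $\mathfrak{t}' = \mathfrak{t} + \mathfrak{t}^q$, and $\mathfrak{n}' = \mathfrak{n} + 1$. Then $|\Lambda| = \frac{1}{2} q^3 (q-1)$. -/
/-!
Write `σ x = x ^ q`. The set `V = {c : 𝔱' ≠ 0}` is the complement of the kernel of the additive map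
`𝔱' = Tr_q^{q⁴}`, which has `q³` elements since its image lies in `𝔽_q`. For `c ∈ V` put
`β = 𝔱' / 𝔱^{q+1} ∈ 𝔽_q` and let `x` solve the Artin–Schreier equation `x² + x = β²`; then
`x ∈ 𝔽_{q²}`. The shift `c ↦ c + 𝔱 x` fixes `𝔱` and `𝔱'`, adds `(𝔱' / 𝔱^q)²` to `𝔫'`, and changes
`Tr_2^q(𝔫'^{q+1} / 𝔱'²)` by `Tr_2^{q²}(𝔫' / 𝔱²) + Tr_2^q(β) = 1`. Choosing `x` as a function of `β`
makes the shift an involution of `V` exchanging `Λ` and `V \ Λ`, so `|Λ| = (q⁴ - q³) / 2`.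
-/
open Finset Polynomial

lemma ncard_sum_pow_pow_eq_zero_le {R : Type*} [CommRing R] [IsDomain R] {b m : ℕ}
    (hb : 2 ≤ b) (hm : 0 < m) :
    {x : R | ∑ j ∈ range m, x ^ b ^ j = 0}.ncard ≤ b ^ (m - 1) := by
  classical
  set p : R[X] := ∑ j ∈ range m, X ^ b ^ j
  have hp : p ≠ 0 := by
    have hcoeff : p.coeff 1 = 1 := by
      rw [finsetSum_coeff, sum_eq_single_of_mem 0 (mem_range.mpr hm)]
      · simp
      · intro j _ hj
        simp [coeff_X_pow, (Nat.one_lt_pow hj (a := b) (by omega)).ne]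
    exact fun h => by simp [h] at hcoeff
  have hdeg : p.natDegree ≤ b ^ (m - 1) :=
    natDegree_sum_le_of_forall_le _ _ fun j hj => by
      rw [natDegree_X_pow]
      exact Nat.pow_le_pow_right (by omega) (by have := mem_range.mp hj; omega)
  have hsub : {x : R | ∑ j ∈ range m, x ^ b ^ j = 0} ⊆ p.roots.toFinset := fun x hx => by
    simpa [p, mem_roots hp, eval_finsetSum] using hx
  calc _ ≤ (p.roots.toFinset : Set R).ncard := Set.ncard_le_ncard hsub (Finset.finite_toSet _)
    _ = p.roots.toFinset.card := Set.ncard_coe_finset _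
    _ ≤ Multiset.card p.roots := Multiset.toFinset_card_le _
    _ ≤ b ^ (m - 1) := (card_roots' p).trans hdeg

lemma AddMonoidHom.card_range_mul_card_ker {G H : Type*} [AddGroup G] [AddGroup H] (f : G →+ H) :
    Nat.card f.range * Nat.card f.ker = Nat.card G := by
  rw [← AddSubgroup.index_ker, mul_comm, AddSubgroup.card_mul_index]

lemma AddMonoidHom.card_ker_eq_of_le {G H : Type*} [AddGroup G] [AddGroup H] (f : G →+ H)
    {a b : ℕ} (ha : 0 < a) (hG : Nat.card G = a * b) (hrange : Nat.card f.range ≤ a)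
    (hker : Nat.card f.ker ≤ b) : Nat.card f.ker = b := by
  refine le_antisymm hker (Nat.le_of_mul_le_mul_left ?_ ha)
  rw [← hG, ← f.card_range_mul_card_ker]
  exact Nat.mul_le_mul_right _ hrange

section FrobTrace
variable {K : Type*} [CommRing K]

/-- On `𝔽_{2^m}` this is the absolute trace `Tr_2^{2^m}`. -/
def frobTrace (m : ℕ) (y : K) : K := ∑ i ∈ range m, y ^ 2 ^ i

lemma frobTrace_add_length (a b : ℕ) (y : K) :
    frobTrace (a + b) y = frobTrace a y + frobTrace b (y ^ 2 ^ a) := by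
  simp only [frobTrace, sum_range_add, ← pow_mul, ← pow_add]

variable [CharP K 2]

lemma frobTrace_add (m : ℕ) (x y : K) : frobTrace m (x + y) = frobTrace m x + frobTrace m y := by
  simp only [frobTrace, add_pow_char_pow, sum_add_distrib]

lemma frobTrace_sq_add_self (m : ℕ) (z : K) : frobTrace m (z ^ 2 + z) = z ^ 2 ^ m + z := by
  have h := sum_range_sub (fun j => z ^ 2 ^ j) m
  simp only [CharTwo.sub_eq_add, pow_zero, pow_one] at h
  rw [← h]
  refine sum_congr rfl fun i _ => ?_
  rw [add_pow_char_pow, ← pow_mul, ← pow_succ']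

lemma frobTrace_sq (m : ℕ) (y : K) : frobTrace m (y ^ 2) = frobTrace m y + (y ^ 2 ^ m + y) := by
  rw [← frobTrace_sq_add_self, ← frobTrace_add, add_left_comm, CharTwo.add_self_eq_zero, add_zero]

lemma frobTrace_sq_of_pow_eq {m : ℕ} {y : K} (hy : y ^ 2 ^ m = y) :
    frobTrace m (y ^ 2) = frobTrace m y := by
  rw [frobTrace_sq, hy, CharTwo.add_self_eq_zero, add_zero]

lemma frobTrace_add_self_length {m : ℕ} {y : K} (hy : y ^ 2 ^ m = y) :
    frobTrace (m + m) y = 0 := by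
  rw [frobTrace_add_length, hy, CharTwo.add_self_eq_zero]

lemma frobTrace_eq_zero_or_one [IsDomain K] {m : ℕ} {y : K} (hy : y ^ 2 ^ m = y) :
    frobTrace m y = 0 ∨ frobTrace m y = 1 := by
  have hsq : frobTrace m y ^ 2 = frobTrace m y := by
    conv_rhs => rw [← frobTrace_sq_of_pow_eq hy]
    simp only [frobTrace, sum_pow_char, ← pow_mul, mul_comm]
  rcases mul_eq_zero.mp (show frobTrace m y * (frobTrace m y - 1) = 0 by linear_combination hsq)
    with h | h
  · exact .inl h
  · exact .inr (sub_eq_zero.mp h)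

end FrobTrace

lemma exists_sq_add_self_eq_s9 {K : Type*} [Field K] [Fintype K] [CharP K 2] {M : ℕ}
    (hK : Fintype.card K = 2 ^ M) {v : K} (hv : frobTrace M v = 0) : ∃ x, x ^ 2 + x = v := by
  let P : K →+ K := (frobenius K 2 : K →+ K) + AddMonoidHom.id K
  have hP (x : K) : P x = x ^ 2 + x := rfl
  have hM : 0 < M := Nat.pos_of_ne_zero fun h => by
    have := Fintype.one_lt_card (α := K)
    simp [hK, h] at this
  have hker : Nat.card P.ker = 2 := by
    have : (P.ker : Set K) = {0, 1} := by
      ext x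
      simp only [SetLike.mem_coe, AddMonoidHom.mem_ker, hP, Set.mem_insert_iff,
        Set.mem_singleton_iff, sq, ← mul_add_one, mul_eq_zero, CharTwo.add_eq_zero]
    rw [← SetLike.coe_sort_coe, Nat.card_coe_set_eq, this, Set.ncard_pair zero_ne_one]
  have hrange : (P.range : Set K).ncard = 2 ^ (M - 1) := by
    have h := P.card_range_mul_card_ker
    rw [hker, Nat.card_eq_fintype_card (α := K), hK, ← Nat.pow_sub_mul_pow 2 (by omega : 1 ≤ M),
      pow_one, ← SetLike.coe_sort_coe, Nat.card_coe_set_eq] at h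
    exact Nat.eq_of_mul_eq_mul_right two_pos h
  have hsub : (P.range : Set K) ⊆ {y | ∑ j ∈ range M, y ^ 2 ^ j = 0} := by
    rintro _ ⟨x, rfl⟩
    change frobTrace M (x ^ 2 + x) = 0
    rw [frobTrace_sq_add_self, ← hK, FiniteField.pow_card, CharTwo.add_self_eq_zero]
  have heq := Set.eq_of_subset_of_ncard_le hsub
    (hrange ▸ ncard_sum_pow_pow_eq_zero_le le_rfl hM) (Set.toFinite _)
  obtain ⟨x, hx⟩ : v ∈ P.range := (heq ▸ hv : v ∈ (P.range : Set K))
  exact ⟨x, hx⟩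

lemma Set.two_mul_ncard_sep_eq_of_involution {α : Type*} {V : Set α} (hV : V.Finite)
    {P : α → Prop} (g : α → α) (hmaps : ∀ x ∈ V, g x ∈ V) (hinv : ∀ x ∈ V, g (g x) = x)
    (hflip : ∀ x ∈ V, P (g x) ↔ ¬P x) : 2 * {x ∈ V | P x}.ncard = V.ncard := by
  set Λ := {x ∈ V | P x}
  have himage : g '' Λ = V \ Λ := by
    ext y
    constructor
    · rintro ⟨x, ⟨hxV, hx⟩, rfl⟩
      exact ⟨hmaps x hxV, fun h => (hflip x hxV).mp h.2 hx⟩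
    · rintro ⟨hyV, hy⟩
      refine ⟨g y, ⟨hmaps y hyV, (hflip y hyV).mpr fun h => hy ⟨hyV, h⟩⟩, hinv y hyV⟩
  have hinj : Set.InjOn g Λ := fun x hx y hy h => by
    rw [← hinv x hx.1, ← hinv y hy.1, h]
  rw [← Set.ncard_sdiff_add_ncard_of_subset (Set.sep_subset V P) hV, ← himage,
    hinj.ncard_image, two_mul]

section Quartic
variable {K : Type*} [Field K] [CharP K 2] (n : ℕ)
local notation "σ" => iterateFrobenius K 2 n

def 𝔱 (c : K) : K := c + σ (σ c)

def 𝔱' (c : K) : K := 𝔱 n c + σ (𝔱 n c)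

def 𝔫' (c : K) : K := c * σ (σ c) + 1

/-- `Tr_2^q(𝔫'^{(q+1)/2} / 𝔱')`, squared inside the trace to avoid the square root. -/
def traceValue (c : K) : K := frobTrace n (𝔫' n c * σ (𝔫' n c) / 𝔱' n c ^ 2)

lemma frob_frob_eq_pow (x : K) : σ (σ x) = x ^ 2 ^ (n + n) := by
  rw [← iterateFrobenius_add_apply, iterateFrobenius_def]

lemma frobTrace_add_frob (w : K) : frobTrace n (w + σ w) = frobTrace (n + n) w := by
  rw [frobTrace_add, frobTrace_add_length]
  rfl

variable {n}

lemma frob_frob_frob_frob [Fintype K] (hK : Fintype.card K = 2 ^ (4 * n)) (x : K) :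
    σ (σ (σ (σ x))) = x := by
  rw [frob_frob_eq_pow, frob_frob_eq_pow, ← pow_mul, ← pow_add,
    show n + n + (n + n) = 4 * n by ring, ← hK, FiniteField.pow_card]

lemma frob_frob_𝔱 [Fintype K] (hK : Fintype.card K = 2 ^ (4 * n)) (c : K) :
    σ (σ (𝔱 n c)) = 𝔱 n c := by
  simp only [𝔱, map_add, frob_frob_frob_frob hK, add_comm]

lemma frob_𝔱' [Fintype K] (hK : Fintype.card K = 2 ^ (4 * n)) (c : K) : σ (𝔱' n c) = 𝔱' n c := by
  rw [𝔱', map_add, frob_frob_𝔱 hK, add_comm]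

lemma frob_frob_𝔫' [Fintype K] (hK : Fintype.card K = 2 ^ (4 * n)) (c : K) :
    σ (σ (𝔫' n c)) = 𝔫' n c := by
  simp only [𝔫', map_add, map_mul, map_one, frob_frob_frob_frob hK, mul_comm]

lemma frob_traceValue_arg [Fintype K] (hK : Fintype.card K = 2 ^ (4 * n)) (c : K) :
    σ (𝔫' n c * σ (𝔫' n c) / 𝔱' n c ^ 2) = 𝔫' n c * σ (𝔫' n c) / 𝔱' n c ^ 2 := by
  rw [map_div₀, map_mul, map_pow, frob_frob_𝔫' hK, frob_𝔱' hK, mul_comm]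

lemma traceValue_eq_zero_or_one [Fintype K] (hK : Fintype.card K = 2 ^ (4 * n)) (c : K) :
    traceValue n c = 0 ∨ traceValue n c = 1 :=
  frobTrace_eq_zero_or_one (frob_traceValue_arg hK c)

lemma 𝔱_ne_zero {c : K} (h : 𝔱' n c ≠ 0) : 𝔱 n c ≠ 0 := fun ht => h (by simp [𝔱', ht])

lemma 𝔱_add {a : K} (ha : σ (σ a) = a) (c : K) : 𝔱 n (c + a) = 𝔱 n c := by
  rw [𝔱, 𝔱, map_add, map_add, ha]
  linear_combination CharTwo.add_self_eq_zero a

lemma 𝔱'_add {a : K} (ha : σ (σ a) = a) (c : K) : 𝔱' n (c + a) = 𝔱' n c := by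
  rw [𝔱', 𝔱', 𝔱_add ha]

lemma 𝔫'_add {a : K} (ha : σ (σ a) = a) (c : K) : 𝔫' n (c + a) = 𝔫' n c + a * (𝔱 n c + a) := by
  rw [𝔫', 𝔫', map_add, map_add, ha, 𝔱]
  ring

lemma frob_frob_of_sq_add_self_eq {x y : K} (hy : σ y = y) (hx : x ^ 2 + x = y) :
    σ (σ x) = x := by
  have h := frobTrace_sq_add_self (n + n) x
  rw [hx, frobTrace_add_self_length hy, ← frob_frob_eq_pow] at h
  exact CharTwo.add_eq_zero.mp h.symm

lemma frobTrace_𝔫'_div_sq [Fintype K] (hK : Fintype.card K = 2 ^ (4 * n)) {c : K}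
    (ht : 𝔱 n c ≠ 0) :
    frobTrace (n + n) (𝔫' n c / 𝔱 n c ^ 2) = 1 + frobTrace (n + n) (𝔱 n c)⁻¹ := by
  have hc : σ (σ c) = c + 𝔱 n c := by rw [𝔱]; linear_combination -CharTwo.add_self_eq_zero c
  have hsplit : 𝔫' n c / 𝔱 n c ^ 2 = ((c / 𝔱 n c) ^ 2 + c / 𝔱 n c) + (𝔱 n c)⁻¹ ^ 2 := by
    rw [𝔫', hc]
    field_simp
  have hu : (c / 𝔱 n c) ^ 2 ^ (n + n) + c / 𝔱 n c = 1 := by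
    rw [← frob_frob_eq_pow, map_div₀, map_div₀, frob_frob_𝔱 hK, hc, ← add_div, add_right_comm,
      CharTwo.add_self_eq_zero, zero_add, div_self ht]
  have hinv : (𝔱 n c)⁻¹ ^ 2 ^ (n + n) = (𝔱 n c)⁻¹ := by
    rw [← frob_frob_eq_pow, map_inv₀, map_inv₀, frob_frob_𝔱 hK]
  rw [hsplit, frobTrace_add, frobTrace_sq_add_self, hu, frobTrace_sq_of_pow_eq hinv]

lemma shift_mul_frob_div_sq {t N x : K} (hτ : t + σ t ≠ 0) (ht : σ (σ t) = t)
    (hx : x ^ 2 + x = ((t + σ t) / (t * σ t)) ^ 2) :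
    (N + t * x * (t + t * x)) * σ (N + t * x * (t + t * x)) / (t + σ t) ^ 2
      = N * σ N / (t + σ t) ^ 2 + (N / t ^ 2 + σ (N / t ^ 2))
        + ((t + σ t) / (t * σ t)) ^ 2 := by
  have ht0 : t ≠ 0 := fun h => hτ (by simp [h])
  have hσt0 : σ t ≠ 0 := (_root_.map_ne_zero _).mpr ht0
  have hshift : t * x * (t + t * x) = ((t + σ t) / σ t) ^ 2 := by
    rw [show t * x * (t + t * x) = t ^ 2 * (x ^ 2 + x) by ring, hx]
    field_simp
  have hσshift : σ (t * x * (t + t * x)) = ((t + σ t) / t) ^ 2 := by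
    rw [hshift, map_pow, map_div₀, map_add, ht, add_comm]
  rw [map_add, hσshift, hshift, map_div₀, map_pow]
  field_simp
  ring

lemma frob_𝔱'_div [Fintype K] (hK : Fintype.card K = 2 ^ (4 * n)) (c : K) :
    σ (𝔱' n c / (𝔱 n c * σ (𝔱 n c))) = 𝔱' n c / (𝔱 n c * σ (𝔱 n c)) := by
  rw [map_div₀, map_mul, frob_𝔱' hK, frob_frob_𝔱 hK, mul_comm]

lemma frob_frob_𝔱_mul [Fintype K] (hK : Fintype.card K = 2 ^ (4 * n)) {c x : K}
    (hx : x ^ 2 + x = (𝔱' n c / (𝔱 n c * σ (𝔱 n c))) ^ 2) :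
    σ (σ (𝔱 n c * x)) = 𝔱 n c * x := by
  rw [map_mul, map_mul, frob_frob_𝔱 hK,
    frob_frob_of_sq_add_self_eq (by rw [map_pow, frob_𝔱'_div hK]) hx]

lemma traceValue_shift [Fintype K] (hK : Fintype.card K = 2 ^ (4 * n)) {c x : K}
    (hτ : 𝔱' n c ≠ 0) (hx : x ^ 2 + x = (𝔱' n c / (𝔱 n c * σ (𝔱 n c))) ^ 2) :
    traceValue n (c + 𝔱 n c * x) = traceValue n c + 1 := by
  have ha := frob_frob_𝔱_mul hK hx
  have ht : 𝔱 n c ≠ 0 := 𝔱_ne_zero hτ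
  have hβ : 𝔱' n c / (𝔱 n c * σ (𝔱 n c)) = (𝔱 n c)⁻¹ + σ (𝔱 n c)⁻¹ := by
    rw [𝔱', map_inv₀, inv_add_inv ht ((_root_.map_ne_zero _).mpr ht), add_comm]
  rw [traceValue, traceValue, 𝔱'_add ha, 𝔫'_add ha, 𝔱',
    shift_mul_frob_div_sq hτ (frob_frob_𝔱 hK c) hx, ← 𝔱', frobTrace_add, frobTrace_add, frobTrace_add_frob, frobTrace_𝔫'_div_sq hK ht,
    frobTrace_sq_of_pow_eq (frob_𝔱'_div hK c), hβ, frobTrace_add_frob]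
  linear_combination CharTwo.add_self_eq_zero (frobTrace (n + n) (𝔱 n c)⁻¹)

lemma sum_pow_pow_four_eq_𝔱' (c : K) : ∑ j ∈ range 4, c ^ (2 ^ n) ^ j = 𝔱' n c := by
  simp only [sum_range_succ, range_zero, sum_empty, 𝔱', 𝔱, map_add, iterateFrobenius_def,
    ← pow_mul]
  ring

lemma ncard_𝔱'_eq_zero [Fintype K] (hK : Fintype.card K = 2 ^ (4 * n)) :
    {c : K | 𝔱' n c = 0}.ncard = (2 ^ n) ^ 3 := by
  have hn : n ≠ 0 := by
    rintro rfl
    simpa [hK] using Fintype.one_lt_card (α := K)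
  have hq : 2 ≤ 2 ^ n := Nat.le_self_pow hn 2
  let T : K →+ K := AddMonoidHom.mk' (𝔱' n) fun a b => by simp only [𝔱', 𝔱, map_add]; ring
  have hker : (T.ker : Set K) = {c | ∑ j ∈ range 4, c ^ (2 ^ n) ^ j = 0} :=
    Set.ext fun c => by
      change 𝔱' n c = 0 ↔ ∑ j ∈ range 4, c ^ (2 ^ n) ^ j = 0
      rw [sum_pow_pow_four_eq_𝔱']
  have hrange : (T.range : Set K) ⊆ {y | ∑ j ∈ range 2, y ^ (2 ^ n) ^ j = 0} := by
    rintro _ ⟨c, rfl⟩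
    change ∑ j ∈ range 2, 𝔱' n c ^ (2 ^ n) ^ j = 0
    simp only [sum_range_succ, range_zero, sum_empty, pow_zero, pow_one, zero_add]
    exact (congrArg (𝔱' n c + ·) (frob_𝔱' hK c)).trans (CharTwo.add_self_eq_zero _)
  change (T.ker : Set K).ncard = _
  rw [← Nat.card_coe_set_eq, SetLike.coe_sort_coe]
  refine T.card_ker_eq_of_le (a := 2 ^ n) (by positivity) ?_ ?_ ?_
  · rw [Nat.card_eq_fintype_card, hK]
    ring
  · rw [← SetLike.coe_sort_coe, Nat.card_coe_set_eq]
    simpa using (Set.ncard_le_ncard hrange).trans (ncard_sum_pow_pow_eq_zero_le hq two_pos)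
  · rw [← SetLike.coe_sort_coe, Nat.card_coe_set_eq, hker]
    exact ncard_sum_pow_pow_eq_zero_le hq (by norm_num)

lemma exists_sq_add_self_eq_sq [Fintype K] (hK : Fintype.card K = 2 ^ (4 * n)) {b : K}
    (hb : σ b = b) : ∃ x, x ^ 2 + x = b ^ 2 := by
  refine exists_sq_add_self_eq_s9 hK ?_
  rw [show 4 * n = (n + n) + (n + n) by ring]
  exact frobTrace_add_self_length (by rw [← frob_frob_eq_pow, map_pow, map_pow, hb, hb])

lemma two_mul_ncard_traceValue_eq_one [Fintype K] (hK : Fintype.card K = 2 ^ (4 * n)) :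
    2 * {c : K | 𝔱' n c ≠ 0 ∧ traceValue n c = 1}.ncard = (2 ^ n) ^ 4 - (2 ^ n) ^ 3 := by
  have hroot (b : K) : ∃ x : K, σ b = b → x ^ 2 + x = b ^ 2 := by
    by_cases hb : σ b = b
    · obtain ⟨x, hx⟩ := exists_sq_add_self_eq_sq hK hb
      exact ⟨x, fun _ => hx⟩
    · exact ⟨0, fun h => absurd h hb⟩
  -- `root` depends on `c` only through `β c`, which the shift preserves: this makes it an involution.
  choose root hroot using hroot
  set β : K → K := fun c => 𝔱' n c / (𝔱 n c * σ (𝔱 n c))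
  have hx (c : K) := hroot (β c) (frob_𝔱'_div hK c)
  have hβ (c : K) : β (c + 𝔱 n c * root (β c)) = β c := by
    simp only [β, 𝔱_add (frob_frob_𝔱_mul hK (hx c)), 𝔱'_add (frob_frob_𝔱_mul hK (hx c))]
  have hV : {c : K | 𝔱' n c ≠ 0}.ncard = (2 ^ n) ^ 4 - (2 ^ n) ^ 3 := by
    rw [← Set.compl_ofPred, Set.ncard_compl, ncard_𝔱'_eq_zero hK, Nat.card_eq_fintype_card, hK]
    congr 1
    ring
  rw [← hV]
  refine Set.two_mul_ncard_sep_eq_of_involution (Set.toFinite _)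
    (fun c => c + 𝔱 n c * root (β c)) (fun c hc => ?_) (fun c hc => ?_) (fun c hc => ?_)
  · change 𝔱' n (c + _) ≠ 0
    rwa [𝔱'_add (frob_frob_𝔱_mul hK (hx c))]
  · simp only [hβ, 𝔱_add (frob_frob_𝔱_mul hK (hx c)), add_assoc, CharTwo.add_self_eq_zero, add_zero]
  · rw [traceValue_shift hK hc (hx c)]
    rcases traceValue_eq_zero_or_one hK c with h | h <;> simp [h, CharTwo.add_self_eq_zero]

lemma 𝔱'_eq_pow (c : K) : 𝔱' n c = (c + c ^ (2 ^ n) ^ 2) + (c + c ^ (2 ^ n) ^ 2) ^ 2 ^ n := by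
  simp only [𝔱', 𝔱, iterateFrobenius_def, ← pow_mul, sq]

lemma 𝔫'_mul_frob_eq_pow (c : K) :
    𝔫' n c * σ (𝔫' n c) = (c ^ ((2 ^ n) ^ 2 + 1) + 1) ^ (2 ^ n + 1) := by
  have h : 𝔫' n c = c ^ ((2 ^ n) ^ 2 + 1) + 1 := by
    rw [𝔫', iterateFrobenius_def, iterateFrobenius_def, ← pow_mul, ← sq, pow_succ' c]
  rw [h, pow_succ _ (2 ^ n), mul_comm, iterateFrobenius_def]

lemma frobTrace_div_𝔱'_of_sq_eq [Fintype K] (hK : Fintype.card K = 2 ^ (4 * n)) {c s : K}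
    (hs : s ^ 2 = 𝔫' n c * σ (𝔫' n c)) : frobTrace n (s / 𝔱' n c) = traceValue n c := by
  have hsq : (s / 𝔱' n c) ^ 2 = 𝔫' n c * σ (𝔫' n c) / 𝔱' n c ^ 2 := by rw [div_pow, hs]
  have hfix : σ (s / 𝔱' n c) = s / 𝔱' n c := frobenius_inj K 2 <| by
    rw [frobenius_def, frobenius_def, ← map_pow, hsq, frob_traceValue_arg hK]
  rw [traceValue, ← hsq, frobTrace_sq_of_pow_eq hfix]

lemma sqrt_condition_iff [Fintype K] (hK : Fintype.card K = 2 ^ (4 * n)) (c : K) :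
    (c ≠ 0 ∧ 𝔱' n c ≠ 0 ∧ ∃ s, s ^ 2 = 𝔫' n c * σ (𝔫' n c) ∧ frobTrace n (s / 𝔱' n c) = 1) ↔
      (𝔱' n c ≠ 0 ∧ traceValue n c = 1) := by
  constructor
  · rintro ⟨-, hτ, s, hs, htr⟩
    exact ⟨hτ, frobTrace_div_𝔱'_of_sq_eq hK hs ▸ htr⟩
  · rintro ⟨hτ, htr⟩
    obtain ⟨s, hs⟩ := FiniteField.isSquare_of_char_two (ringChar.eq K 2) (𝔫' n c * σ (𝔫' n c))
    refine ⟨fun hc => hτ (by simp [hc, 𝔱', 𝔱]), hτ, s, by rw [hs, sq], ?_⟩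
    rwa [frobTrace_div_𝔱'_of_sq_eq hK (by rw [hs, sq])]

end Quartic

theorem stmt9_general (n : ℕ) (q : ℕ) (hq : q = 2 ^ n)
    (K : Type*) [Field K] [Fintype K] (hK : Fintype.card K = q ^ 4) :
    {c : K | c ≠ 0 ∧
        (c + c ^ q ^ 2) + (c + c ^ q ^ 2) ^ q ≠ 0 ∧
        ∃ s : K, s ^ 2 = (c ^ (q ^ 2 + 1) + 1) ^ (q + 1) ∧
          (∑ i ∈ Finset.range n,
            (s / ((c + c ^ q ^ 2) + (c + c ^ q ^ 2) ^ q)) ^ 2 ^ i) = 1}.ncard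
      = q ^ 3 * (q - 1) / 2 := by
  subst hq
  rw [← pow_mul, mul_comm] at hK
  have : CharP K 2 := charP_of_card_eq_prime_pow hK
  calc _ = {c : K | 𝔱' n c ≠ 0 ∧ traceValue n c = 1}.ncard :=
        congrArg Set.ncard <| Set.ext fun c => by
          rw [Set.mem_ofPred_eq, ← 𝔱'_eq_pow, ← 𝔫'_mul_frob_eq_pow]
          exact sqrt_condition_iff hK c
    _ = (2 ^ n) ^ 3 * (2 ^ n - 1) / 2 := by
      rw [Nat.mul_sub_one, ← pow_succ, ← two_mul_ncard_traceValue_eq_one hK,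
        Nat.mul_div_cancel_left _ two_pos]

/-- The set `Λ` of `c ∈ 𝔽_{q⁴}ˣ` with `𝔱' ≠ 0` and
`Tr_2^q(𝔫'^{(q+1)/2}/𝔱') = 1` has cardinality `q³(q-1)/2`, where
`𝔱 = c + c^{q²}`, `𝔫 = c^{q²+1}`, `𝔱' = 𝔱 + 𝔱^q`, `𝔫' = 𝔫 + 1`, and
`𝔫'^{(q+1)/2}` is the unique square root `s` of `𝔫'^{q+1}`. -/
theorem stmt9 (n : ℕ) (hn : 0 < n) (q : ℕ) (hq : q = 2 ^ n)
    (K : Type*) [Field K] [Fintype K] (hK : Fintype.card K = q ^ 4) :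
    {c : K | c ≠ 0 ∧
        (c + c ^ q ^ 2) + (c + c ^ q ^ 2) ^ q ≠ 0 ∧
        ∃ s : K, s ^ 2 = (c ^ (q ^ 2 + 1) + 1) ^ (q + 1) ∧
          (∑ i ∈ Finset.range n,
            (s / ((c + c ^ q ^ 2) + (c + c ^ q ^ 2) ^ q)) ^ 2 ^ i) = 1}.ncard
      = q ^ 3 * (q - 1) / 2 :=
  stmt9_general n q hq K hK
end

section
/- Let $n$ be a positive integer, $q = 2^n$, and $d = q^3 + q^2 + q - 1$. For $b = 1$, the equation $x^d + (x+1)^d = 1$ has exactly $q^2$ solutions $x \in \mathbb{F}_{q^4}$. -/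
/-!
If `x` solves the equation, clearing denominators by `x²(x+1)²` shows that `y = x²` is a root of
`Y² + cY + a`, where `a = x^(d+2)`, `b = (x+1)^(d+2)` and `c = 1 + a + b`. As
`d + 2 = q³ + q² + q + 1`, `a` and `b` are norms from `𝔽_{q⁴}` to `𝔽_q`, so `y^q` is a root too:
`y^q = y` or `y^q = y + c`, and either way `y^(q²) = y`, hence `x ∈ 𝔽_{q²}`. Conversely, on `𝔽_{q²}`
the power `x^d` equals `x^(2q)`, and `x^(2q) + (x+1)^(2q) = 1` in characteristic 2. Finally `𝔽_{q²}`
has `q²` elements: it is the kernel of the additive map `x ↦ x^(q²) + x` of `𝔽_{q⁴}`, whose image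
lies in its kernel, and it has at most `q²` elements as the roots of `X^(q²) - X`.
-/

open Polynomial

theorem AddMonoidHom.card_le_card_ker_sq_of_range_le_ker {G : Type*} [AddGroup G] [Finite G]
    (f : G →+ G) (h : f.range ≤ f.ker) : Nat.card G ≤ Nat.card f.ker ^ 2 := by
  rw [← f.ker.card_mul_index, AddSubgroup.index_ker, sq]
  exact Nat.mul_le_mul_left _ (AddSubgroup.card_le_of_le h)

theorem pow_eq_pow_two_mul_of_pow_pow_eq_self {M : Type*} [CommMonoidWithZero M]
    [IsCancelMulZero M] {q d : ℕ} (hd : d + 1 = q ^ 3 + q ^ 2 + q) {x : M} (hx : (x ^ q) ^ q = x) :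
    x ^ d = x ^ (2 * q) := by
  have hq : q ≠ 0 := by rintro rfl; simp at hd
  rcases eq_or_ne x 0 with rfl | hx0
  · have : 0 < q ^ 2 := by positivity
    rw [zero_pow (by omega), zero_pow (by omega)]
  refine mul_right_cancel₀ hx0 ?_
  calc x ^ d * x = ((x ^ q) ^ q) ^ q * (x ^ q) ^ q * x ^ q := by
        simp only [← pow_succ, hd, pow_add, pow_three', sq, pow_mul]
    _ = x ^ (2 * q) * x := by rw [hx, two_mul, pow_add, mul_right_comm]

section Field

variable {K : Type*} [Field K] {q : ℕ}

theorem pow_norm_exponent_pow_eq_self [Fintype K] (hK : Fintype.card K = q ^ 4) (y : K) :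
    (y ^ (q ^ 3 + q ^ 2 + q + 1)) ^ q = y ^ (q ^ 3 + q ^ 2 + q + 1) := by
  calc (y ^ (q ^ 3 + q ^ 2 + q + 1)) ^ q = y ^ q ^ 4 * y ^ (q ^ 3 + q ^ 2 + q) := by
        rw [← pow_mul, ← pow_add]; ring_nf
    _ = _ := by rw [← hK, FiniteField.pow_card, ← pow_succ']

theorem ncard_setOf_pow_eq_self_le (hq : 1 < q) : {x : K | x ^ q = x}.ncard ≤ q := by
  have hne : (X ^ q - X : K[X]) ≠ 0 := FiniteField.X_pow_card_sub_X_ne_zero K hq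
  calc {x : K | x ^ q = x}.ncard = ((X ^ q - X : K[X]).rootSet K).ncard := by
        congr 1; ext x; simp [mem_rootSet_of_ne hne, sub_eq_zero]
    _ ≤ q := (ncard_rootSet_le _ K).trans (FiniteField.X_pow_card_sub_X_natDegree_eq K hq).le

end Field

section CharTwo

variable {K : Type*} [Field K] [CharP K 2] {q : ℕ}

theorem pow_pow_eq_self_of_sq_eq_mul_add (hadd : ∀ u v : K, (u + v) ^ q = u ^ q + v ^ q)
    {a c y : K} (ha : a ^ q = a) (hc : c ^ q = c) (hy : y ^ 2 = c * y + a) :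
    (y ^ q) ^ q = y := by
  set z := y ^ q
  have hz : z ^ 2 = c * z + a := by
    rw [← pow_right_comm, hy, hadd, mul_pow, ha, hc]
  have h2 : (2 : K) = 0 := CharTwo.two_eq_zero
  have hroots : (z + y) * (z + y + c) = 0 := by
    linear_combination hz + hy + (z * y + c * z + c * y + a) * h2
  rcases mul_eq_zero.mp hroots with h | h
  · have hzy : z = y := CharTwo.add_eq_zero.mp h
    rw [hzy]
    exact hzy
  · have hzy : z = y + c := by linear_combination h - (y + c) * h2
    rw [hzy, hadd, hc]
    linear_combination hzy + c * h2

theorem pow_pow_eq_self_of_pow_add_add_one_pow_eq_one [Fintype K]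
    (hK : Fintype.card K = q ^ 4) (hadd : ∀ u v : K, (u + v) ^ q = u ^ q + v ^ q) {d : ℕ}
    (hd : d + 2 = q ^ 3 + q ^ 2 + q + 1) {x : K} (hx : x ^ d + (x + 1) ^ d = 1) :
    (x ^ q) ^ q = x := by
  set a := x ^ (d + 2)
  set b := (x + 1) ^ (d + 2)
  have ha : a ^ q = a := by simp only [a, hd]; exact pow_norm_exponent_pow_eq_self hK x
  have hb : b ^ q = b := by simp only [b, hd]; exact pow_norm_exponent_pow_eq_self hK (x + 1)
  have hc : (1 + a + b) ^ q = 1 + a + b := by rw [hadd, hadd, one_pow, ha, hb]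
  have hcleared : a * (x + 1) ^ 2 + b * x ^ 2 = x ^ 2 * (x + 1) ^ 2 := by
    simp only [a, b, pow_add]
    linear_combination x ^ 2 * (x + 1) ^ 2 * hx
  have hy : (x ^ 2) ^ 2 = (1 + a + b) * x ^ 2 + a := by
    linear_combination -hcleared + (a * x - x ^ 3 - x ^ 2) * CharTwo.two_eq_zero (R := K)
  apply CharTwo.sq_injective
  simpa only [pow_right_comm _ 2] using pow_pow_eq_self_of_sq_eq_mul_add hadd ha hc hy

theorem pow_add_add_one_pow_eq_one_of_pow_pow_eq_self
    (hadd : ∀ u v : K, (u + v) ^ q = u ^ q + v ^ q) {d : ℕ}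
    (hd : d + 1 = q ^ 3 + q ^ 2 + q) {x : K} (hx : (x ^ q) ^ q = x) :
    x ^ d + (x + 1) ^ d = 1 := by
  have hx1 : ((x + 1) ^ q) ^ q = x + 1 := by rw [hadd, hadd, one_pow, one_pow, hx]
  rw [pow_eq_pow_two_mul_of_pow_pow_eq_self hd hx, pow_eq_pow_two_mul_of_pow_pow_eq_self hd hx1,
    pow_mul, pow_mul, CharTwo.add_sq, one_pow, hadd, one_pow, ← add_assoc,
    CharTwo.add_self_eq_zero, zero_add]

theorem ncard_setOf_pow_eq_self [Fintype K] (hK : Fintype.card K = q ^ 2)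
    (hadd : ∀ u v : K, (u + v) ^ q = u ^ q + v ^ q) : {x : K | x ^ q = x}.ncard = q := by
  have hq : 1 < q := by
    have := hK ▸ Fintype.one_lt_card (α := K)
    nlinarith
  let f : K →+ K := AddMonoidHom.mk' (fun x ↦ x ^ q + x) fun u v ↦ by rw [hadd]; ring
  have hker : (f.ker : Set K) = {x | x ^ q = x} := by
    ext x
    exact CharTwo.add_eq_zero
  have hrange : f.range ≤ f.ker := by
    rintro _ ⟨x, rfl⟩
    change (x ^ q + x) ^ q + (x ^ q + x) = 0
    rw [hadd, ← pow_mul, ← sq, ← hK, FiniteField.pow_card, add_comm x, CharTwo.add_self_eq_zero]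
  have hcard : q ^ 2 ≤ Nat.card f.ker ^ 2 := by
    rw [← hK, ← Nat.card_eq_fintype_card]
    exact f.card_le_card_ker_sq_of_range_le_ker hrange
  have hker_card : Nat.card f.ker = {x : K | x ^ q = x}.ncard := by
    rw [← hker]
    exact Nat.card_coe_set_eq _
  rw [← hker_card]
  exact le_antisymm (hker_card ▸ ncard_setOf_pow_eq_self_le hq)
    ((Nat.pow_le_pow_iff_left two_ne_zero).mp hcard)

end CharTwo

theorem stmt10_general (n : ℕ) (q : ℕ) (hq : q = 2 ^ n)
    (K : Type*) [Field K] [Fintype K] (hK : Fintype.card K = q ^ 4)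
    (d : ℕ) (hd : d = q ^ 3 + q ^ 2 + q - 1) :
    {x : K | x ^ d + (x + 1) ^ d = 1}.ncard = q ^ 2 := by
  have : Fact (Nat.Prime 2) := ⟨Nat.prime_two⟩
  have : CharP K 2 := charP_of_card_eq_prime_pow (f := n * 4) (by rw [hK, hq, pow_mul])
  have hadd : ∀ u v : K, (u + v) ^ q = u ^ q + v ^ q := hq ▸ fun _ _ ↦ add_pow_char_pow ..
  have hadd_sq : ∀ u v : K, (u + v) ^ q ^ 2 = u ^ q ^ 2 + v ^ q ^ 2 := by
    intro u v
    simp only [sq, pow_mul, hadd]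
  have hq_pos : 0 < q := hq ▸ Nat.two_pow_pos n
  have hsol : {x : K | x ^ d + (x + 1) ^ d = 1} = {x | x ^ q ^ 2 = x} := by
    ext x
    rw [Set.mem_ofPred_eq, Set.mem_ofPred_eq, sq, pow_mul]
    exact ⟨pow_pow_eq_self_of_pow_add_add_one_pow_eq_one hK hadd (by omega),
      pow_add_add_one_pow_eq_one_of_pow_pow_eq_self hadd (by omega)⟩
  rw [hsol]
  exact ncard_setOf_pow_eq_self (by rw [hK]; ring) hadd_sq

/-- For `b = 1` the equation `x^d + (x+1)^d = 1`, `d = q³+q²+q-1`, has exactly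
`q²` solutions in `𝔽_{q⁴}`. -/
theorem stmt10 (n : ℕ) (hn : 0 < n) (q : ℕ) (hq : q = 2 ^ n)
    (K : Type*) [Field K] [Fintype K] (hK : Fintype.card K = q ^ 4)
    (d : ℕ) (hd : d = q ^ 3 + q ^ 2 + q - 1) :
    {x : K | x ^ d + (x + 1) ^ d = 1}.ncard = q ^ 2 :=
  stmt10_general n q hq K hK d hd
end

section
/- Let $q = 2^n$ and let $\mathfrak{n}' \in \mathbb{F}_{q^2}^*$ and $\mathfrak{t}' \in \mathbb{F}_q^*$. Suppose $z_1, z_2 \in \mathbb{F}_{q^2}$ are the two distinct roots of $\mathfrak{n}' z^2 + \mathfrak{t}' z + \mathfrak{n}'^q = 0$. Then both $z_1$ and $z_2$ lie in $\mu_{q+1}$ if and only if $\mathrm{Tr}_2^q(\mathfrak{n}'^{q+1}/\mathfrak{t}'^2) = 1$. -/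
/-!
Put `w = 𝔫' z / 𝔱'` and `x = 𝔫'^{q+1} / 𝔱'²`. In characteristic 2 the equation becomes the
Artin–Schreier equation `w² = w + x`, and iterating the Frobenius gives `w^{2^k} = w + Σ_{i<k} x^{2^i}`,
so `w^q = w + Tr(x)`. Since `𝔱'^q = 𝔱'`, also `w^{q+1} = x z^{q+1}`; hence `z^{q+1} = 1` iff
`w^{q+1} = x = w² + w`, i.e. iff `(w + Tr(x)) w = (w + 1) w`, i.e. iff `Tr(x) = 1`.
-/

open Finset

section CharTwo

variable {R : Type*} [CommRing R] [CharP R 2]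

theorem pow_two_pow_eq_add_sum_of_sq_eq_add {w x : R} (hw : w ^ 2 = w + x) (k : ℕ) :
    w ^ 2 ^ k = w + ∑ i ∈ range k, x ^ 2 ^ i := by
  induction k with
  | zero => simp
  | succ k ih =>
    rw [pow_succ, pow_mul, ih, CharTwo.add_sq, hw, CharTwo.sum_sq, sum_range_succ', pow_zero,
      pow_one, add_assoc]
    simp only [← pow_mul, ← pow_succ]
    ring

theorem pow_two_pow_add_one_eq_iff_sum_eq_one {K : Type*} [Field K] [CharP K 2] {w x : K}
    (hw0 : w ≠ 0) (hw : w ^ 2 = w + x) (n : ℕ) :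
    w ^ (2 ^ n + 1) = x ↔ ∑ i ∈ range n, x ^ 2 ^ i = 1 := by
  have hx : x = (w + 1) * w := by linear_combination -hw - w * CharTwo.two_eq_zero (R := K)
  rw [pow_succ, pow_two_pow_eq_add_sum_of_sq_eq_add hw, hx, mul_left_inj' hw0, add_right_inj]

end CharTwo

section QuadraticRoot

variable {K : Type*} [Field K] {q : ℕ} {n' t' z : K}

theorem div_mul_sq_eq_add_of_root [CharP K 2] (ht'0 : t' ≠ 0)
    (hz : n' * z ^ 2 + t' * z + n' ^ q = 0) :
    (n' * z / t') ^ 2 = n' * z / t' + n' ^ (q + 1) / t' ^ 2 := by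
  field_simp
  linear_combination n' * hz - (n' * z * t' + n' ^ (q + 1)) * CharTwo.two_eq_zero (R := K)

theorem div_mul_pow_succ_eq (ht' : t' ^ q = t') :
    (n' * z / t') ^ (q + 1) = n' ^ (q + 1) / t' ^ 2 * z ^ (q + 1) := by
  rw [div_pow, mul_pow, pow_succ t', ht', ← sq]
  ring

theorem ne_zero_of_root (hn' : n' ≠ 0) (hz : n' * z ^ 2 + t' * z + n' ^ q = 0) : z ≠ 0 := by
  rintro rfl
  exact pow_ne_zero q hn' (by simpa using hz)

theorem pow_succ_eq_one_iff_sum_eq_one_of_root [CharP K 2] {m : ℕ} (hq : q = 2 ^ m)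
    (hn' : n' ≠ 0) (ht'0 : t' ≠ 0) (ht' : t' ^ q = t')
    (hz : n' * z ^ 2 + t' * z + n' ^ q = 0) :
    z ^ (q + 1) = 1 ↔ ∑ i ∈ range m, (n' ^ (q + 1) / t' ^ 2) ^ 2 ^ i = 1 := by
  have hx0 : n' ^ (q + 1) / t' ^ 2 ≠ 0 := div_ne_zero (pow_ne_zero _ hn') (pow_ne_zero _ ht'0)
  have hw0 : n' * z / t' ≠ 0 := div_ne_zero (mul_ne_zero hn' (ne_zero_of_root hn' hz)) ht'0
  rw [← pow_two_pow_add_one_eq_iff_sum_eq_one hw0 (div_mul_sq_eq_add_of_root ht'0 hz), ← hq,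
    div_mul_pow_succ_eq ht', mul_eq_left₀ hx0]

end QuadraticRoot

theorem stmt15_general (n : ℕ) (q : ℕ) (hq : q = 2 ^ n)
    (K : Type*) [Field K] [Fintype K] (hK : Fintype.card K = q ^ 2)
    (n' t' : K) (hn' : n' ≠ 0) (ht'0 : t' ≠ 0) (ht' : t' ^ q = t')
    (z1 z2 : K)
    (h1 : n' * z1 ^ 2 + t' * z1 + n' ^ q = 0)
    (h2 : n' * z2 ^ 2 + t' * z2 + n' ^ q = 0) :
    (z1 ^ (q + 1) = 1 ∧ z2 ^ (q + 1) = 1) ↔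
      (∑ i ∈ Finset.range n, (n' ^ (q + 1) / t' ^ 2) ^ 2 ^ i) = 1 := by
  have : CharP K 2 := charP_of_card_eq_prime_pow (f := n * 2) (by rw [hK, hq, pow_mul])
  have key := fun z hz => pow_succ_eq_one_iff_sum_eq_one_of_root (z := z) hq hn' ht'0 ht' hz
  rw [key z1 h1, key z2 h2, and_self]

/-- If `z₁ ≠ z₂` are the two roots in `𝔽_{q²}` of `𝔫'z² + 𝔱'z + 𝔫'^q = 0`
with `𝔫' ∈ 𝔽_{q²}ˣ`, `𝔱' ∈ 𝔽_qˣ`, then `z₁, z₂ ∈ μ_{q+1}` iff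
`Tr_2^q(𝔫'^{q+1}/𝔱'²) = 1`. -/
theorem stmt15 (n : ℕ) (hn : 0 < n) (q : ℕ) (hq : q = 2 ^ n)
    (K : Type*) [Field K] [Fintype K] (hK : Fintype.card K = q ^ 2)
    (n' t' : K) (hn' : n' ≠ 0) (ht'0 : t' ≠ 0) (ht' : t' ^ q = t')
    (z1 z2 : K) (hz : z1 ≠ z2)
    (h1 : n' * z1 ^ 2 + t' * z1 + n' ^ q = 0)
    (h2 : n' * z2 ^ 2 + t' * z2 + n' ^ q = 0) :
    (z1 ^ (q + 1) = 1 ∧ z2 ^ (q + 1) = 1) ↔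
      (∑ i ∈ Finset.range n, (n' ^ (q + 1) / t' ^ 2) ^ 2 ^ i) = 1 :=
  stmt15_general n q hq K hK n' t' hn' ht'0 ht' z1 z2 h1 h2
end

section
/- Let $q = 2^n$ with $n \geq 1$ and let $b'' \in \mu_{q+1} \setminus \{1\}$ (so $b''^{q+1} = 1$, $b'' \neq 1$). Define $A(z) = \frac{(b'' + b''^{-1})(z^2+1)}{(z^2 + b''^2)(z^2 + b''^{-2})}$ for $z \in \mathbb{F}_q$ with $z \neq 1$. Then the number of pairs $(x_1, z_1) \in \mathbb{F}_q^* \times \mathbb{F}_q$ with $x_1 \neq z_1$, $z_1 \neq 1$, and $\mathrm{Tr}_2^q(x_1 A(z_1)) = 1$ equals $\frac{q(q-1)}{2}$. -/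
/-!
Let `F = {x | x ^ q = x}`, the subfield of order `q`, and `T` the absolute trace of `F`, which
takes values in `{0, 1}`. Each fibre of `T` consists of roots of a polynomial of degree `q / 2`,
so both fibres have exactly `q / 2` elements. Since `b ^ q = b⁻¹ ≠ b`, the element `b` is not in
`F`, and for `z ∈ F \ {1}` the value `A(z)` is a nonzero element of `F`; thus `x ↦ x * A(z)`
permutes `F`, and `q / 2` values of `x` give `T(x * A(z)) = 1`. The side conditions `x ≠ 0` and
`x ≠ z` exclude nothing: `T(0) = 0`, and `z * A(z) = g + g ^ 2` with
`g = (z ^ 2 + 1) / ((z + b) * (z + b⁻¹)) ∈ F`, so `T(z * A(z)) = g + g ^ q = 0`.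
Summing over the `q - 1` values of `z` gives `q (q - 1) / 2`.
-/

open Polynomial

theorem X_pow_sub_X_dvd_X_pow_pow_sub_X {R : Type*} [CommRing R] {q : ℕ} (hq : 1 ≤ q) (m : ℕ) :
    (X ^ q - X : R[X]) ∣ X ^ q ^ m - X := by
  obtain ⟨k, hk⟩ : q - 1 ∣ q ^ m - 1 := by simpa using Nat.sub_dvd_pow_sub_pow q 1 m
  have hX (e : ℕ) (he : 1 ≤ e) : (X : R[X]) ^ e - X = X * (X ^ (e - 1) - 1) := by
    rw [mul_sub, mul_one, ← pow_succ', Nat.sub_add_cancel he]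
  rw [hX q hq, hX _ (Nat.one_le_pow _ _ hq), hk, pow_mul]
  exact mul_dvd_mul_left X (by simpa using sub_dvd_pow_sub_pow (X ^ (q - 1) : R[X]) 1 k)

theorem ncard_setOf_pow_eq_self_s16 {K : Type*} [Field K] [Fintype K] (p : ℕ) [CharP K p] {q m : ℕ}
    (hpq : p ∣ q) (hq : 1 < q) (hK : Fintype.card K = q ^ m) :
    {x : K | x ^ q = x}.ncard = q := by
  have hcard : 1 < Fintype.card K := Fintype.one_lt_card
  have hsplits : (X ^ q - X : K[X]).Splits := by
    refine Splits.of_dvd ?_ (FiniteField.X_pow_card_sub_X_ne_zero K hcard)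
      (hK ▸ X_pow_sub_X_dvd_X_pow_pow_sub_X hq.le m)
    rw [splits_iff_card_roots, FiniteField.roots_X_pow_card_sub_X,
      FiniteField.X_pow_card_sub_X_natDegree_eq K hcard]
    rfl
  have hroots : {x : K | x ^ q = x} = (X ^ q - X : K[X]).rootSet K := by
    ext x
    simp [mem_rootSet, FiniteField.X_pow_card_sub_X_ne_zero K hq, sub_eq_zero]
  rw [hroots, ← Nat.card_coe_set_eq, Nat.card_eq_fintype_card,
    card_rootSet_eq_natDegree (galois_poly_separable p q hpq) (by simpa using hsplits),
    FiniteField.X_pow_card_sub_X_natDegree_eq K hq]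

def absTrace {K : Type*} [Semiring K] (n : ℕ) (x : K) : K := ∑ i ∈ Finset.range n, x ^ 2 ^ i

section absTrace

variable {K : Type*} [CommRing K] [CharP K 2] {n : ℕ}

theorem absTrace_add (x y : K) : absTrace n (x + y) = absTrace n x + absTrace n y := by
  simp only [absTrace, add_pow_char_pow, Finset.sum_add_distrib]

theorem absTrace_sq (x : K) : absTrace n x ^ 2 = absTrace n (x ^ 2) := by
  simp only [absTrace, sum_pow_char, ← pow_mul, mul_comm]

theorem absTrace_add_sq (x : K) : absTrace n (x + x ^ 2) = x + x ^ 2 ^ n := by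
  have hstep (i : ℕ) : (x ^ 2) ^ 2 ^ i = x ^ 2 ^ (i + 1) := by rw [← pow_mul, pow_succ']
  calc absTrace n (x + x ^ 2) = ∑ i ∈ Finset.range n, (x ^ 2 ^ (i + 1) - x ^ 2 ^ i) := by
        simp only [absTrace, add_pow_char_pow, hstep, CharTwo.sub_eq_add, add_comm]
    _ = x + x ^ 2 ^ n := by
        rw [Finset.sum_range_sub (fun i => x ^ 2 ^ i), pow_zero, pow_one, CharTwo.sub_eq_add,
          add_comm]

theorem absTrace_eq_zero_or_one [IsDomain K] {x : K} (hx : x ^ 2 ^ n = x) :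
    absTrace n x = 0 ∨ absTrace n x = 1 := by
  have h : absTrace n x + absTrace n (x ^ 2) = 0 := by
    rw [← absTrace_add, absTrace_add_sq, hx, CharTwo.add_self_eq_zero]
  rw [← IsIdempotentElem.iff_eq_zero_or_one, IsIdempotentElem, ← sq, absTrace_sq]
  exact (CharTwo.add_eq_zero.mp h).symm

end absTrace

theorem ncard_absTrace_fiber_le {K : Type*} [Field K] (m : ℕ) (c : K) :
    {x : K | absTrace (m + 1) x = c}.ncard ≤ 2 ^ m := by
  set P : K[X] := X ^ 2 ^ m + (∑ i ∈ Finset.range m, X ^ 2 ^ i - C c)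
  have hlow : (∑ i ∈ Finset.range m, X ^ 2 ^ i - C c : K[X]).degree < ↑(2 ^ m) := by
    refine (degree_sub_le _ _).trans_lt (max_lt ?_ ?_)
    · refine (degree_sum_le _ _).trans_lt ((Finset.sup_lt_iff (WithBot.bot_lt_coe _)).mpr ?_)
      intro i hi
      exact (degree_X_pow_le _).trans_lt
        (WithBot.coe_lt_coe.mpr (Nat.pow_lt_pow_right one_lt_two (Finset.mem_range.mp hi)))
    · exact degree_C_le.trans_lt (WithBot.coe_lt_coe.mpr (Nat.two_pow_pos m))
  have hmonic : P.Monic := monic_X_pow_add hlow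
  have hdeg : P.natDegree = 2 ^ m := by
    rw [natDegree_add_eq_left_of_degree_lt (by rwa [degree_X_pow]), natDegree_X_pow]
  have hsub : {x : K | absTrace (m + 1) x = c} ⊆ P.rootSet K := by
    intro x hx
    rw [Set.mem_ofPred_eq, absTrace, Finset.sum_range_succ] at hx
    refine mem_rootSet.mpr ⟨hmonic.ne_zero, ?_⟩
    simp only [P, ← hx, map_add, map_sub, map_sum, map_pow, aeval_X, aeval_C,
      Algebra.algebraMap_self, RingHom.id_apply]
    ring
  calc {x : K | absTrace (m + 1) x = c}.ncard ≤ (P.rootSet K).ncard :=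
        Set.ncard_le_ncard hsub (P.rootSet_finite K)
    _ ≤ P.natDegree := ncard_rootSet_le P K
    _ = 2 ^ m := hdeg

theorem ncard_absTrace_eq_one {K : Type*} [Field K] [Finite K] [CharP K 2] {m : ℕ}
    (hF : {x : K | x ^ 2 ^ (m + 1) = x}.ncard = 2 ^ (m + 1)) :
    {x : K | x ^ 2 ^ (m + 1) = x ∧ absTrace (m + 1) x = 1}.ncard = 2 ^ m := by
  set F := {x : K | x ^ 2 ^ (m + 1) = x}
  set G := {x : K | x ^ 2 ^ (m + 1) = x ∧ absTrace (m + 1) x = 1}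
  have hdiff : F \ G ⊆ {x | absTrace (m + 1) x = 0} := fun x ⟨hxF, hxG⟩ =>
    (absTrace_eq_zero_or_one hxF).resolve_right fun h => hxG ⟨hxF, h⟩
  have hsplit : (F \ G).ncard + G.ncard = F.ncard :=
    Set.ncard_sdiff_add_ncard_of_subset fun x hx => hx.1
  have hG : G.ncard ≤ 2 ^ m :=
    (Set.ncard_le_ncard fun x hx => hx.2).trans (ncard_absTrace_fiber_le m 1)
  have hdiff' : (F \ G).ncard ≤ 2 ^ m :=
    (Set.ncard_le_ncard hdiff).trans (ncard_absTrace_fiber_le m 0)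
  rw [hF, pow_succ] at hsplit
  omega

def coeffA {K : Type*} [DivisionRing K] (b z : K) : K :=
  (b + b⁻¹) * (z ^ 2 + 1) / ((z ^ 2 + b ^ 2) * (z ^ 2 + b⁻¹ ^ 2))

def coeffG {K : Type*} [DivisionRing K] (b z : K) : K :=
  (z ^ 2 + 1) / ((z + b) * (z + b⁻¹))

section coeffA

variable {K : Type*} [Field K]

theorem map_coeffA (φ : K →+* K) (b z : K) : φ (coeffA b z) = coeffA (φ b) (φ z) := by
  simp [coeffA, map_div₀, map_inv₀]

theorem map_coeffG (φ : K →+* K) (b z : K) : φ (coeffG b z) = coeffG (φ b) (φ z) := by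
  simp [coeffG, map_div₀, map_inv₀]

theorem coeffA_inv (b z : K) : coeffA b⁻¹ z = coeffA b z := by
  rw [coeffA, coeffA, inv_inv, add_comm b⁻¹, mul_comm (z ^ 2 + b⁻¹ ^ 2)]

theorem coeffG_inv (b z : K) : coeffG b⁻¹ z = coeffG b z := by
  rw [coeffG, coeffG, inv_inv, mul_comm (z + b⁻¹)]

variable [CharP K 2]

theorem mul_coeffA_eq_coeffG_add_sq {b z : K} (hb : b ≠ 0) (hzb : z + b ≠ 0)
    (hzb' : z + b⁻¹ ≠ 0) : z * coeffA b z = coeffG b z + coeffG b z ^ 2 := by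
  have hbc : b * b⁻¹ = 1 := mul_inv_cancel₀ hb
  rw [coeffA, coeffG, ← CharTwo.add_sq z b, ← CharTwo.add_sq z b⁻¹]
  generalize b⁻¹ = c at *
  field_simp
  linear_combination (-(1 + z ^ 2)) * hbc - (1 + z ^ 2) ^ 2 * CharTwo.two_eq_zero (R := K)

theorem add_ne_zero_of_pow_eq_self {n : ℕ} {b z : K} (hbq : b ^ 2 ^ n = b⁻¹) (hbb : b⁻¹ ≠ b)
    (hz : z ^ 2 ^ n = z) : z + b ≠ 0 := by
  rw [Ne, CharTwo.add_eq_zero]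
  rintro rfl
  exact hbb (hbq.symm.trans hz)

theorem add_inv_ne_zero_of_pow_eq_self {n : ℕ} {b z : K} (hbq : b ^ 2 ^ n = b⁻¹)
    (hbb : b⁻¹ ≠ b) (hz : z ^ 2 ^ n = z) : z + b⁻¹ ≠ 0 :=
  add_ne_zero_of_pow_eq_self (by rw [inv_pow, hbq]) (by rwa [inv_inv, ne_comm]) hz

theorem coeffA_pow_eq_self {n : ℕ} {b z : K} (hbq : b ^ 2 ^ n = b⁻¹) (hz : z ^ 2 ^ n = z) :
    coeffA b z ^ 2 ^ n = coeffA b z := by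
  rw [← iterateFrobenius_def (p := 2), map_coeffA, iterateFrobenius_def, iterateFrobenius_def,
    hbq, hz, coeffA_inv]

theorem coeffG_pow_eq_self {n : ℕ} {b z : K} (hbq : b ^ 2 ^ n = b⁻¹) (hz : z ^ 2 ^ n = z) :
    coeffG b z ^ 2 ^ n = coeffG b z := by
  rw [← iterateFrobenius_def (p := 2), map_coeffG, iterateFrobenius_def, iterateFrobenius_def,
    hbq, hz, coeffG_inv]

theorem coeffA_ne_zero {n : ℕ} {b z : K} (hbq : b ^ 2 ^ n = b⁻¹) (hbb : b⁻¹ ≠ b)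
    (hz : z ^ 2 ^ n = z) (hz1 : z ≠ 1) : coeffA b z ≠ 0 := by
  have hsum : b + b⁻¹ ≠ 0 := by rwa [Ne, CharTwo.add_eq_zero, eq_comm]
  have hz1' : z + 1 ≠ 0 := by rwa [Ne, CharTwo.add_eq_zero]
  rw [coeffA, ← CharTwo.add_sq z b, ← CharTwo.add_sq z b⁻¹, ← one_pow 2, ← CharTwo.add_sq]
  exact div_ne_zero (mul_ne_zero hsum (pow_ne_zero 2 hz1')) (mul_ne_zero
    (pow_ne_zero 2 (add_ne_zero_of_pow_eq_self hbq hbb hz))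
    (pow_ne_zero 2 (add_inv_ne_zero_of_pow_eq_self hbq hbb hz)))

theorem absTrace_mul_coeffA_self {n : ℕ} {b z : K} (hbq : b ^ 2 ^ n = b⁻¹) (hbb : b⁻¹ ≠ b)
    (hz : z ^ 2 ^ n = z) : absTrace n (z * coeffA b z) = 0 := by
  have hb : b ≠ 0 := by rintro rfl; exact hbb inv_zero
  rw [mul_coeffA_eq_coeffG_add_sq hb (add_ne_zero_of_pow_eq_self hbq hbb hz)
    (add_inv_ne_zero_of_pow_eq_self hbq hbb hz), absTrace_add_sq, coeffG_pow_eq_self hbq hz,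
    CharTwo.add_self_eq_zero]

end coeffA

theorem inv_ne_self_of_ne_one {K : Type*} [Field K] [CharP K 2] {b : K} (hb0 : b ≠ 0)
    (hb1 : b ≠ 1) : b⁻¹ ≠ b := by
  intro h
  apply hb1
  rw [← CharTwo.sq_inj, one_pow, sq]
  nth_rewrite 2 [← h]
  exact mul_inv_cancel₀ hb0

theorem ncard_pairs_absTrace_mul_coeffA_eq_one {K : Type*} [Field K] [CharP K 2] {n : ℕ} {b : K}
    (hbq : b ^ 2 ^ n = b⁻¹) (hbb : b⁻¹ ≠ b) :
    {p : K × K | p.1 ^ 2 ^ n = p.1 ∧ p.1 ≠ 0 ∧ p.2 ^ 2 ^ n = p.2 ∧ p.2 ≠ 1 ∧ p.1 ≠ p.2 ∧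
        absTrace n (p.1 * coeffA b p.2) = 1}.ncard =
      {y : K | y ^ 2 ^ n = y ∧ absTrace n y = 1}.ncard * ({z : K | z ^ 2 ^ n = z} \ {1}).ncard := by
  rw [← Set.ncard_prod]
  refine Set.BijOn.ncard_eq (f := fun p => (p.1 * coeffA b p.2, p.2))
    (Set.InvOn.bijOn (f' := fun p => (p.1 / coeffA b p.2, p.2)) ⟨?_, ?_⟩ ?_ ?_)
  · rintro ⟨x, z⟩ ⟨-, -, hz, hz1, -, -⟩
    simp [mul_div_cancel_right₀ _ (coeffA_ne_zero hbq hbb hz hz1)]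
  · rintro ⟨y, z⟩ ⟨-, hz, hz1⟩
    simp [div_mul_cancel₀ _ (coeffA_ne_zero hbq hbb hz hz1)]
  · rintro ⟨x, z⟩ ⟨hx, -, hz, hz1, -, hT⟩
    exact ⟨⟨by rw [mul_pow, hx, coeffA_pow_eq_self hbq hz], hT⟩, hz, hz1⟩
  · rintro ⟨y, z⟩ ⟨⟨hy, hT⟩, hz, hz1⟩
    have hA := coeffA_ne_zero hbq hbb hz hz1
    have hy0 : y ≠ 0 := by
      rintro rfl
      simp [absTrace] at hT
    refine ⟨by rw [div_pow, hy, coeffA_pow_eq_self hbq hz], div_ne_zero hy0 hA, hz, hz1, ?_,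
      by rwa [div_mul_cancel₀ _ hA]⟩
    intro hyz
    rw [div_eq_iff hA] at hyz
    rw [hyz, absTrace_mul_coeffA_self hbq hbb hz] at hT
    exact zero_ne_one hT

/-- For `b'' ∈ μ_{q+1} \ {1}` and
`A(z) = (b''+b''⁻¹)(z²+1)/((z²+b''²)(z²+b''⁻²))`, the number of pairs
`(x₁, z₁) ∈ 𝔽_qˣ × 𝔽_q` with `x₁ ≠ z₁`, `z₁ ≠ 1`, `Tr_2^q(x₁A(z₁)) = 1`
is `q(q-1)/2`. -/
theorem stmt16 (n : ℕ) (hn : 0 < n) (q : ℕ) (hq : q = 2 ^ n)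
    (K : Type*) [Field K] [Fintype K] (hK : Fintype.card K = q ^ 4)
    (b'' : K) (hb : b'' ^ (q + 1) = 1) (hb1 : b'' ≠ 1) :
    {p : K × K |
        p.1 ^ q = p.1 ∧ p.1 ≠ 0 ∧ p.2 ^ q = p.2 ∧ p.2 ≠ 1 ∧ p.1 ≠ p.2 ∧
        (∑ i ∈ Finset.range n,
          (p.1 * ((b'' + b''⁻¹) * (p.2 ^ 2 + 1) /
            ((p.2 ^ 2 + b'' ^ 2) * (p.2 ^ 2 + (b''⁻¹) ^ 2)))) ^ 2 ^ i) = 1}.ncard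
      = q * (q - 1) / 2 := by
  subst hq
  obtain ⟨m, rfl⟩ := Nat.exists_eq_add_one_of_ne_zero hn.ne'
  have : CharP K 2 := charP_of_card_eq_prime_pow (by rw [hK, ← pow_mul])
  have hbq : b'' ^ 2 ^ (m + 1) = b''⁻¹ := eq_inv_of_mul_eq_one_left (by rwa [← pow_succ])
  have hb0 : b'' ≠ 0 := by
    rintro rfl
    simp at hb
  have hF : {x : K | x ^ 2 ^ (m + 1) = x}.ncard = 2 ^ (m + 1) :=
    ncard_setOf_pow_eq_self_s16 2 (dvd_pow_self 2 m.succ_ne_zero) (Nat.one_lt_two_pow m.succ_ne_zero) hK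
  calc _ = _ := ncard_pairs_absTrace_mul_coeffA_eq_one hbq (inv_ne_self_of_ne_one hb0 hb1)
    _ = 2 ^ m * (2 ^ (m + 1) - 1) := by
      rw [ncard_absTrace_eq_one hF, Set.ncard_sdiff_singleton_of_mem (by simp), hF]
    _ = 2 ^ (m + 1) * (2 ^ (m + 1) - 1) / 2 := by
      rw [pow_succ 2 m, mul_right_comm, Nat.mul_div_cancel _ two_pos]
end
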